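/- arXiv:1804.06864 — 3 statements merged into one kernel-verified Lean document; each statement's English description precedes it below -/
import Mathlib

section
/- Let A be any finite set of vertices of T. Then the exterior boundary satisfies |H(A)| ≥ |A|. -/
open SimpleGraph

/-- `x'` is a child of `x` in the tree `G` rooted at `x₀`: it is adjacent to `x`
and one step further away from the root. -/
def IsChild {V : Type*} (G : SimpleGraph V) (x₀ x x' : V) : Prop :=
  G.Adj x x' ∧ G.dist x₀ x' = G.dist x₀ x + 1

/-- The subtree generated by `x'` (relative to `x`): the set of vertices reachable
from `x'` by a walk not passing through `x`. -/
def SubtreeOf {V : Type*} (G : SimpleGraph V) (x x' : V) : Set V :=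
  {y | ∃ p : G.Walk x' y, x ∉ p.support}

/-- The frontier of a set `A`: vertices `x ∈ A` having a child `x'` whose
subtree is disjoint from `A`. -/
def Frontier {V : Type*} (G : SimpleGraph V) (x₀ : V) (A : Set V) : Set V :=
  {x ∈ A | ∃ x', IsChild G x₀ x x' ∧ SubtreeOf G x x' ∩ A = ∅}

/-- The exterior boundary of `A`: the children `x'` of frontier vertices `x`
whose subtree is disjoint from `A`. -/
def ExtBoundary {V : Type*} (G : SimpleGraph V) (x₀ : V) (A : Set V) : Set V :=
  {x' | ∃ x ∈ Frontier G x₀ A, IsChild G x₀ x x' ∧ SubtreeOf G x x' ∩ A = ∅}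

/-!
Induct on `A`, adding a vertex `a` farthest from the root. A vertex has at most one neighbour
closer to the root, so `a` has at least two children; their subtrees avoid `A` because `a` is
farthest, so both enter the exterior boundary, and they were not in it before since parents are
unique. Adding `a` loses at most one old boundary vertex: a lost vertex is a child whose subtree
contains `a`, and of two such subtrees either one contains the other's parent (impossible, the
parents lie in `A`) or they are sibling subtrees, which are disjoint in a tree.
-/

section Subtree

variable {V : Type*} {G : SimpleGraph V}

lemma self_notMem_subtreeOf (x x' : V) : x ∉ SubtreeOf G x x' :=
  fun ⟨p, hp⟩ => hp p.end_mem_support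

lemma mem_subtreeOf_of_adj {x x' z : V} (h : G.Adj x' z) (hx' : x' ≠ x) (hz : z ≠ x) :
    z ∈ SubtreeOf G x x' :=
  ⟨.cons h .nil, by simp [hx'.symm, hz.symm]⟩

lemma disjoint_subtreeOf (hG : G.IsAcyclic) {y b₁ b₂ : V} (h₁ : G.Adj y b₁) (h₂ : G.Adj y b₂)
    (hne : b₁ ≠ b₂) : Disjoint (SubtreeOf G y b₁) (SubtreeOf G y b₂) := by
  classical
  refine Set.disjoint_left.2 fun z ⟨w₁, hw₁⟩ ⟨w₂, hw₂⟩ => ?_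
  -- The bypass of `w₁ ++ w₂⁻¹` and `b₁ - y - b₂` are two paths from `b₁` to `b₂`.
  let w := (w₁.append w₂.reverse).bypass
  have hw : y ∉ w.support := fun h => by
    have := (w₁.append w₂.reverse).support_bypass_subset_support h
    simp_all [Walk.mem_support_append_iff]
  have hpath : (Walk.cons h₁.symm (.cons h₂ .nil)).IsPath := by
    simp [h₁.ne', h₂.ne, hne]
  have : w = _ := congrArg Subtype.val <|
    (hG.subsingleton_path _ _).elim ⟨w, Walk.bypass_isPath _⟩ ⟨_, hpath⟩
  simp [this] at hw

lemma mem_subtreeOf_or_mem_subtreeOf {y₁ b₁ y₂ b₂ z : V} (hz₁ : z ∈ SubtreeOf G y₁ b₁)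
    (hz₂ : z ∈ SubtreeOf G y₂ b₂) (h₂ : G.Adj y₂ b₂) (hne : y₁ ≠ y₂) :
    y₁ ∈ SubtreeOf G y₂ b₂ ∨ y₂ ∈ SubtreeOf G y₁ b₁ := by
  classical
  obtain ⟨w₁, hw₁⟩ := hz₁
  obtain ⟨w₂, hw₂⟩ := hz₂
  by_cases hy₁ : y₁ ∈ w₂.support
  · exact .inl ⟨w₂.takeUntil y₁ hy₁, fun h => hw₂ (w₂.support_takeUntil_subset_support hy₁ h)⟩
  · refine .inr ⟨(w₁.append w₂.reverse).concat h₂.symm, ?_⟩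
    simp [Walk.support_concat, Walk.mem_support_append_iff, hw₁, hy₁, hne]

end Subtree

section RootedTree

variable {V : Type*} {G : SimpleGraph V} {x₀ : V}

namespace IsChild

lemma root_notMem_subtreeOf (hG : G.IsTree) {y b : V} (h : IsChild G x₀ y b) :
    x₀ ∉ SubtreeOf G y b := by
  classical
  rintro ⟨w, hw⟩
  obtain ⟨p, hp⟩ := hG.connected.exists_walk_length_eq_dist x₀ y
  -- `p` extended by the edge `y b` is a geodesic, hence the path from `x₀` to `b`; it meets `y`.
  have hgeod : (p.concat h.1).IsPath :=
    Walk.isPath_of_length_eq_dist _ (by rw [Walk.length_concat, hp, h.2])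
  have : (p.concat h.1) = w.bypass.reverse := congrArg Subtype.val <|
    (hG.isAcyclic.subsingleton_path _ _).elim ⟨_, hgeod⟩ ⟨_, w.bypass_isPath.reverse⟩
  have hy : y ∈ w.bypass.reverse.support := this ▸ by simp [Walk.support_concat]
  rw [Walk.support_reverse, List.mem_reverse] at hy
  exact hw (w.support_bypass_subset_support hy)

lemma dist_lt_of_mem_subtreeOf (hG : G.IsTree) {y b z : V} (h : IsChild G x₀ y b)
    (hz : z ∈ SubtreeOf G y b) : G.dist x₀ y < G.dist x₀ z := by
  classical
  obtain ⟨w, hw⟩ := hz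
  obtain ⟨q, hq⟩ := hG.connected.exists_walk_length_eq_dist x₀ z
  have hyq : y ∈ q.support := by
    by_contra hyq
    refine h.root_notMem_subtreeOf hG ⟨w.append q.reverse, ?_⟩
    simp [Walk.mem_support_append_iff, hw, hyq]
  have hyz : y ≠ z := fun hyz => hw (hyz ▸ w.end_mem_support)
  calc G.dist x₀ y ≤ (q.takeUntil y hyq).length := dist_le _
    _ < q.length := Walk.length_takeUntil_lt_length hyq hyz
    _ = G.dist x₀ z := hq

lemma unique_parent (hG : G.IsTree) {x y c : V} (hx : IsChild G x₀ x c)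
    (hy : IsChild G x₀ y c) : x = y := by
  by_contra hne
  have hxy := hy.dist_lt_of_mem_subtreeOf hG (mem_subtreeOf_of_adj hx.1.symm hy.1.ne' hne)
  have hyx := hx.dist_lt_of_mem_subtreeOf hG
    (mem_subtreeOf_of_adj hy.1.symm hx.1.ne' (Ne.symm hne))
  omega

end IsChild

lemma exists_two_children (hG : G.IsTree) [G.LocallyFinite] {x : V} (hdeg : 3 ≤ G.degree x) :
    ∃ c₁ c₂, c₁ ≠ c₂ ∧ IsChild G x₀ x c₁ ∧ IsChild G x₀ x c₂ := by
  classical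
  set children := (G.neighborFinset x).filter (IsChild G x₀ x)
  have hparent : ∀ z ∈ G.neighborFinset x \ children, IsChild G x₀ z x := by
    intro z hz
    obtain ⟨hzN, hzC⟩ := Finset.mem_sdiff.1 hz
    have hadj := (mem_neighborFinset G x z).1 hzN
    exact ⟨hadj.symm, (hG.dist_eq_dist_add_one_of_adj x₀ hadj).resolve_right
      fun h => hzC (Finset.mem_filter.2 ⟨hzN, hadj, h⟩)⟩
  have hparents : (G.neighborFinset x \ children).card ≤ 1 :=
    Finset.card_le_one.2 fun a ha b hb => (hparent a ha).unique_parent hG (hparent b hb)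
  have hcard : 1 < children.card := by
    have := Finset.card_sdiff_add_card_eq_card (s := children) (Finset.filter_subset _ _)
    rw [card_neighborFinset_eq_degree] at this
    omega
  obtain ⟨c₁, hc₁, c₂, hc₂, hne⟩ := Finset.one_lt_card.1 hcard
  exact ⟨c₁, c₂, hne, (Finset.mem_filter.1 hc₁).2, (Finset.mem_filter.1 hc₂).2⟩

end RootedTree

section ExtBoundary

variable {V : Type*} {G : SimpleGraph V} {x₀ : V} {A : Set V}

lemma mem_extBoundary_iff {b : V} :
    b ∈ ExtBoundary G x₀ A ↔ ∃ y ∈ A, IsChild G x₀ y b ∧ SubtreeOf G y b ∩ A = ∅ :=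
  ⟨fun ⟨y, hy, hb⟩ => ⟨y, hy.1, hb⟩, fun ⟨y, hyA, hb⟩ => ⟨y, ⟨hyA, b, hb⟩, hb⟩⟩

lemma extBoundary_finite [G.LocallyFinite] (hA : A.Finite) : (ExtBoundary G x₀ A).Finite :=
  (hA.biUnion fun y _ => (G.neighborSet y).toFinite).subset fun _ hb =>
    let ⟨_, hyA, hy, _⟩ := mem_extBoundary_iff.1 hb
    Set.mem_biUnion hyA hy.1

lemma extBoundary_sdiff_extBoundary_insert_subsingleton (hG : G.IsAcyclic) (a : V) :
    (ExtBoundary G x₀ A \ ExtBoundary G x₀ (insert a A)).Subsingleton := by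
  have hlost : ∀ b ∈ ExtBoundary G x₀ A \ ExtBoundary G x₀ (insert a A),
      ∃ y ∈ A, IsChild G x₀ y b ∧ SubtreeOf G y b ∩ A = ∅ ∧ a ∈ SubtreeOf G y b := by
    rintro b ⟨hb, hb'⟩
    obtain ⟨y, hyA, hy, hS⟩ := mem_extBoundary_iff.1 hb
    refine ⟨y, hyA, hy, hS, ?_⟩
    by_contra ha
    refine hb' (mem_extBoundary_iff.2 ⟨y, .inr hyA, hy, ?_⟩)
    rw [Set.insert_eq, Set.inter_union_distrib_left, hS, Set.union_empty]
    exact Set.inter_singleton_eq_empty.2 ha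
  intro b₁ hb₁ b₂ hb₂
  obtain ⟨y₁, hy₁A, hy₁, hS₁, ha₁⟩ := hlost b₁ hb₁
  obtain ⟨y₂, hy₂A, hy₂, hS₂, ha₂⟩ := hlost b₂ hb₂
  by_contra hne
  obtain rfl | hy := eq_or_ne y₁ y₂
  · exact Set.disjoint_left.1 (disjoint_subtreeOf hG hy₁.1 hy₂.1 hne) ha₁ ha₂
  · rcases mem_subtreeOf_or_mem_subtreeOf ha₁ ha₂ hy₂.1 hy with h | h
    · exact hS₂.subset ⟨h, hy₁A⟩
    · exact hS₁.subset ⟨h, hy₂A⟩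

namespace IsChild

lemma notMem_extBoundary (hG : G.IsTree) {a c : V} (h : IsChild G x₀ a c) (ha : a ∉ A) :
    c ∉ ExtBoundary G x₀ A := fun hc =>
  let ⟨_, hyA, hy, _⟩ := mem_extBoundary_iff.1 hc
  ha (h.unique_parent hG hy ▸ hyA)

lemma mem_extBoundary_insert (hG : G.IsTree) {a c : V} (h : IsChild G x₀ a c)
    (hmax : ∀ z ∈ A, G.dist x₀ z ≤ G.dist x₀ a) : c ∈ ExtBoundary G x₀ (insert a A) := by
  refine mem_extBoundary_iff.2 ⟨a, Set.mem_insert a A, h, Set.eq_empty_of_forall_notMem ?_⟩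
  rintro z ⟨hz, rfl | hzA⟩
  · exact self_notMem_subtreeOf _ _ hz
  · exact (h.dist_lt_of_mem_subtreeOf hG hz).not_ge (hmax z hzA)

end IsChild

lemma ncard_extBoundary_add_one_le [G.LocallyFinite] (hG : G.IsTree) (hA : A.Finite) {a : V}
    (ha : a ∉ A) (hdeg : 3 ≤ G.degree a) (hmax : ∀ z ∈ A, G.dist x₀ z ≤ G.dist x₀ a) :
    (ExtBoundary G x₀ A).ncard + 1 ≤ (ExtBoundary G x₀ (insert a A)).ncard := by
  set H := ExtBoundary G x₀ A
  set H' := ExtBoundary G x₀ (insert a A)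
  obtain ⟨c₁, c₂, hne, hc₁, hc₂⟩ := exists_two_children (x₀ := x₀) hG hdeg
  have hfin : H.Finite := extBoundary_finite hA
  have hfin' : H'.Finite := extBoundary_finite (hA.insert a)
  have hlost : (H \ H').ncard ≤ 1 :=
    (Set.ncard_le_one hfin.sdiff).2 (extBoundary_sdiff_extBoundary_insert_subsingleton
      hG.isAcyclic a)
  have hgained : (H ∩ H').ncard + 2 ≤ H'.ncard := by
    have hdisj : Disjoint (H ∩ H') {c₁, c₂} := by
      refine Set.disjoint_right.2 ?_
      rintro c (rfl | rfl) ⟨hc, -⟩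
      exacts [hc₁.notMem_extBoundary hG ha hc, hc₂.notMem_extBoundary hG ha hc]
    have hsub : H ∩ H' ∪ {c₁, c₂} ⊆ H' := Set.union_subset Set.inter_subset_right <|
      Set.insert_subset (hc₁.mem_extBoundary_insert hG hmax) <|
        Set.singleton_subset_iff.2 (hc₂.mem_extBoundary_insert hG hmax)
    calc (H ∩ H').ncard + 2 = (H ∩ H' ∪ {c₁, c₂}).ncard := by
          rw [Set.ncard_union_eq hdisj (hfin.inter_of_left _), Set.ncard_pair hne]
      _ ≤ H'.ncard := Set.ncard_le_ncard hsub hfin'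
  have := Set.ncard_inter_add_ncard_sdiff_eq_ncard H H' hfin
  omega

end ExtBoundary

theorem ext_boundary_card_ge_general {V : Type*} (G : SimpleGraph V)
    [G.LocallyFinite] (hconn : G.Connected) (hacyc : G.IsAcyclic)
    (x₀ : V) (M : ℕ) (hdeg : ∀ x, 3 ≤ G.degree x ∧ G.degree x ≤ M)
    (A : Set V) (hA : A.Finite) :
    A.ncard ≤ (ExtBoundary G x₀ A).ncard := by
  classical
  have hG : G.IsTree := ⟨hconn, hacyc⟩
  lift A to Finset V using hA with s
  induction s using Finset.induction_on_max_value (G.dist x₀) with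
  | empty => simp
  | insert a s ha hmax ih =>
    rw [Finset.coe_insert, Set.ncard_insert_of_notMem (by simpa using ha)]
    exact (Nat.succ_le_succ ih).trans <|
      ncard_extBoundary_add_one_le hG s.finite_toSet (by simpa using ha) (hdeg a).1 hmax

theorem ext_boundary_card_ge {V : Type*} [Infinite V] (G : SimpleGraph V)
    [G.LocallyFinite] (hconn : G.Connected) (hacyc : G.IsAcyclic)
    (x₀ : V) (M : ℕ) (hdeg : ∀ x, 3 ≤ G.degree x ∧ G.degree x ≤ M)
    (A : Set V) (hA : A.Finite) :
    A.ncard ≤ (ExtBoundary G x₀ A).ncard :=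
  ext_boundary_card_ge_general G hconn hacyc x₀ M hdeg A hA
end

section
/- Let A be any finite set of vertices of T. Then the frontier satisfies |F(A)| ≥ |A|/(M−1). -/
open SimpleGraph

/-!
Send each child `c` of a non-frontier vertex of `A` to a shallowest vertex of `A` in the subtree
of `c`; such a vertex exists because `c` does not witness that its parent is in the frontier. The
map is injective: if two such children had the same image `t`, the deeper one would lie strictly
below the shallower one on the path from `t` to the root, and its parent, a vertex of `A`, would
then be a shallower vertex of `A` in the subtree of the other one. Every vertex has at least two
children (degree at least `3`, at most one parent), so `2 |A \ F(A)| ≤ |A|`, i.e.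
`|A| ≤ 2 |F(A)| ≤ (M - 1) |F(A)|`.
-/

open Finset

namespace SimpleGraph

variable {V : Type*} {G : SimpleGraph V} {x₀ u v w x c t y : V}

lemma Walk.dist_le_length_of_mem_support (p : G.Walk u v) (hw : w ∈ p.support) :
    G.dist u w ≤ p.length := by
  classical
  exact (dist_le (p.takeUntil w hw)).trans (p.length_takeUntil_le_length hw)

lemma IsTree.isChild_or_isChild (hG : G.IsTree) (x₀ : V) (h : G.Adj u v) :
    IsChild G x₀ u v ∨ IsChild G x₀ v u := by
  rcases hG.dist_eq_dist_add_one_of_adj x₀ h with h' | h'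
  · exact Or.inr ⟨h.symm, h'⟩
  · exact Or.inl ⟨h, h'⟩

lemma IsTree.isChild_iff_eq_penultimate (hG : G.IsTree) {q : G.Walk x₀ v} (hq : q.IsPath)
    (hlen : q.length = G.dist x₀ v) (hv : v ≠ x₀) :
    IsChild G x₀ u v ↔ u = q.penultimate := by
  constructor
  · intro h
    obtain ⟨p, hp, hplen⟩ := hG.connected.exists_path_of_dist x₀ u
    have hvp : v ∉ p.support := fun hvp => by
      have := p.dist_le_length_of_mem_support hvp
      have := h.2
      omega
    exact hG.isAcyclic.eq_penultimate_of_adj_end hq h.1.symm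
      (hG.isAcyclic.mem_support_of_ne_mem_support_of_adj_of_isPath hq hp h.1.symm hvp)
  · rintro rfl
    have hnil : ¬q.Nil := fun h => hv h.eq.symm
    refine (hG.isChild_or_isChild x₀ (q.adj_penultimate hnil)).resolve_right fun h => ?_
    have hle : G.dist x₀ q.penultimate ≤ q.length :=
      q.dist_le_length_of_mem_support (q.getVert_mem_support _)
    have := h.2
    omega

lemma IsChild.ne_root (h : IsChild G x₀ x c) : c ≠ x₀ := by
  rintro rfl
  simpa using h.2

open scoped Classical in
/-- The root is its own parent, so that `dist x₀ (parent v) = dist x₀ v - 1` for every `v`. -/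
noncomputable def parent (G : SimpleGraph V) (x₀ v : V) : V :=
  if h : ∃ u, IsChild G x₀ u v then h.choose else v

lemma IsTree.exists_isChild (hG : G.IsTree) (hv : v ≠ x₀) : ∃ u, IsChild G x₀ u v := by
  obtain ⟨q, hq, hlen⟩ := hG.connected.exists_path_of_dist x₀ v
  exact ⟨_, (hG.isChild_iff_eq_penultimate hq hlen hv).2 rfl⟩

lemma IsTree.parent_eq_of_isChild (hG : G.IsTree) (h : IsChild G x₀ u v) :
    G.parent x₀ v = u := by
  have hex : ∃ u, IsChild G x₀ u v := ⟨u, h⟩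
  obtain ⟨q, hq, hlen⟩ := hG.connected.exists_path_of_dist x₀ v
  have key := fun u => hG.isChild_iff_eq_penultimate (u := u) hq hlen h.ne_root
  rw [parent, dif_pos hex, (key _).1 hex.choose_spec, (key _).1 h]

lemma IsTree.isChild_parent (hG : G.IsTree) (hv : v ≠ x₀) :
    IsChild G x₀ (G.parent x₀ v) v := by
  obtain ⟨u, hu⟩ := hG.exists_isChild hv
  rwa [hG.parent_eq_of_isChild hu]

lemma parent_root : G.parent x₀ x₀ = x₀ := by
  rw [parent, dif_neg]
  rintro ⟨_, _, h⟩
  simp at h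

lemma IsTree.dist_parent (hG : G.IsTree) (v : V) :
    G.dist x₀ (G.parent x₀ v) = G.dist x₀ v - 1 := by
  by_cases hv : v = x₀
  · simp [hv, parent_root]
  · have := (hG.isChild_parent hv).2
    omega

lemma IsTree.dist_iterate_parent (hG : G.IsTree) (k : ℕ) (v : V) :
    G.dist x₀ ((G.parent x₀)^[k] v) = G.dist x₀ v - k := by
  induction k with
  | zero => rfl
  | succ k ih =>
    rw [Function.iterate_succ_apply', hG.dist_parent, ih]
    omega

def IsAncestor (G : SimpleGraph V) (x₀ a y : V) : Prop :=
  ∃ k, (G.parent x₀)^[k] y = a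

lemma IsTree.isAncestor_of_mem_subtreeOf (hG : G.IsTree) (hc : IsChild G x₀ x c)
    (hy : y ∈ SubtreeOf G x c) : G.IsAncestor x₀ c y := by
  suffices h : ∀ {v} (p : G.Walk v y), x ∉ p.support → G.IsAncestor x₀ c v →
      G.IsAncestor x₀ c y from hy.elim fun p hxp => h p hxp ⟨0, rfl⟩
  clear hy
  intro v p
  induction p with
  | nil => exact fun _ h => h
  | @cons v u _ h q ih =>
    rintro hx ⟨k, hk⟩
    rw [Walk.support_cons, List.mem_cons, not_or] at hx
    refine ih hx.2 ?_
    rcases hG.isChild_or_isChild x₀ h with hvu | huv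
    · exact ⟨k + 1, by rw [Function.iterate_succ_apply, hG.parent_eq_of_isChild hvu, hk]⟩
    · cases k with
      | zero =>
        have hux : u = x := by
          rw [← hG.parent_eq_of_isChild huv, ← hG.parent_eq_of_isChild hc]
          exact congrArg _ hk
        exact absurd (hux ▸ q.start_mem_support) hx.2
      | succ k =>
        exact ⟨k, by rwa [Function.iterate_succ_apply, hG.parent_eq_of_isChild huv] at hk⟩

lemma IsTree.isAncestor_parent_of_iterate_lt (hG : G.IsTree) {c' : V} {i j : ℕ} (hc : c ≠ x₀)
    (hi : (G.parent x₀)^[i] t = c) (hj : (G.parent x₀)^[j] t = c') (hij : i < j) :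
    G.IsAncestor x₀ c' (G.parent x₀ c) ∧ G.dist x₀ (G.parent x₀ c) < G.dist x₀ t := by
  refine ⟨⟨j - (i + 1), ?_⟩, ?_⟩
  · rw [← hi, ← Function.iterate_succ_apply' (G.parent x₀), ← Function.iterate_add_apply,
      Nat.sub_add_cancel hij, hj]
  · have hc0 : G.dist x₀ c ≠ 0 := fun h => hc (hG.connected.dist_eq_zero_iff.1 h).symm
    rw [hG.dist_parent, ← hi, hG.dist_iterate_parent] at *
    omega

def IsShallowestDescendant (G : SimpleGraph V) (x₀ : V) (A : Set V) (c t : V) : Prop :=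
  t ∈ A ∧ G.IsAncestor x₀ c t ∧
    ∀ y ∈ A, G.IsAncestor x₀ c y → G.dist x₀ t ≤ G.dist x₀ y

lemma exists_isShallowestDescendant {A : Set V} (hA : A.Finite) (hy : y ∈ A)
    (hcy : G.IsAncestor x₀ c y) : ∃ t, G.IsShallowestDescendant x₀ A c t := by
  obtain ⟨t, ⟨htA, htc⟩, hmin⟩ :=
    Set.exists_min_image {y | y ∈ A ∧ G.IsAncestor x₀ c y} (G.dist x₀)
      (hA.subset fun _ h => h.1) ⟨y, hy, hcy⟩
  exact ⟨t, htA, htc, fun y hy hcy => hmin y ⟨hy, hcy⟩⟩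

lemma IsTree.eq_of_isShallowestDescendant {A : Set V} {x' c' : V} (hG : G.IsTree)
    (hc : IsChild G x₀ x c) (hc' : IsChild G x₀ x' c') (hx : x ∈ A) (hx' : x' ∈ A)
    (ht : G.IsShallowestDescendant x₀ A c t) (ht' : G.IsShallowestDescendant x₀ A c' t) :
    c = c' := by
  obtain ⟨-, ⟨i, hi⟩, hmin⟩ := ht
  obtain ⟨-, ⟨j, hj⟩, hmin'⟩ := ht'
  rcases lt_trichotomy i j with hij | rfl | hij
  · obtain ⟨hanc, hlt⟩ := hG.isAncestor_parent_of_iterate_lt hc.ne_root hi hj hij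
    rw [hG.parent_eq_of_isChild hc] at hanc hlt
    exact absurd (hmin' _ hx hanc) hlt.not_ge
  · exact hi.symm.trans hj
  · obtain ⟨hanc, hlt⟩ := hG.isAncestor_parent_of_iterate_lt hc'.ne_root hj hi hij
    rw [hG.parent_eq_of_isChild hc'] at hanc hlt
    exact absurd (hmin _ hx' hanc) hlt.not_ge

open scoped Classical in
noncomputable def children (G : SimpleGraph V) [G.LocallyFinite] (x₀ x : V) : Finset V :=
  {c ∈ G.neighborFinset x | IsChild G x₀ x c}

lemma mem_children [G.LocallyFinite] : c ∈ G.children x₀ x ↔ IsChild G x₀ x c := by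
  simp only [children, mem_filter, mem_neighborFinset, and_iff_right_iff_imp]
  exact And.left

lemma IsTree.degree_le_card_children_add_one (hG : G.IsTree) [G.LocallyFinite] (x : V) :
    G.degree x ≤ #(G.children x₀ x) + 1 := by
  classical
  rw [← card_neighborFinset_eq_degree]
  refine (card_le_card fun u hu => ?_).trans (card_insert_le (G.parent x₀ x) _)
  rw [mem_neighborFinset] at hu
  rcases hG.isChild_or_isChild x₀ hu with h | h
  · exact mem_insert_of_mem (mem_children.2 h)
  · exact mem_insert.2 (Or.inl (hG.parent_eq_of_isChild h).symm)

open scoped Classical in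
lemma IsTree.card_sigma_children_le (hG : G.IsTree) [G.LocallyFinite] (x₀ : V) (A : Finset V) :
    #({x ∈ A | x ∉ Frontier G x₀ ↑A}.sigma (G.children x₀)) ≤ #A := by
  set P := {x ∈ A | x ∉ Frontier G x₀ ↑A}.sigma (G.children x₀)
  have hP : ∀ p ∈ P, p.1 ∈ A ∧ p.1 ∉ Frontier G x₀ ↑A ∧ IsChild G x₀ p.1 p.2 := by
    intro p hp
    simpa [P, mem_children, and_assoc] using hp
  have htop : ∀ p ∈ P, ∃ t, G.IsShallowestDescendant x₀ ↑A p.2 t := by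
    intro p hp
    obtain ⟨hxA, hxF, hc⟩ := hP p hp
    obtain ⟨y, hyS, hyA⟩ : (SubtreeOf G p.1 p.2 ∩ ↑A).Nonempty :=
      Set.nonempty_iff_ne_empty.2 fun h => hxF ⟨hxA, p.2, hc, h⟩
    exact exists_isShallowestDescendant A.finite_toSet hyA (hG.isAncestor_of_mem_subtreeOf hc hyS)
  have : Nonempty V := ⟨x₀⟩
  choose! top htop using htop
  refine card_le_card_of_injOn top (fun p hp => (htop p hp).1) fun p hp p' hp' he => ?_
  obtain ⟨hxA, -, hc⟩ := hP p hp
  obtain ⟨hxA', -, hc'⟩ := hP p' hp'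
  have hcc := hG.eq_of_isShallowestDescendant hc hc' hxA hxA' (htop p hp) (he ▸ htop p' hp')
  have hxx : p.1 = p'.1 := by
    rw [← hG.parent_eq_of_isChild hc, ← hG.parent_eq_of_isChild hc', hcc]
  exact Sigma.ext hxx (heq_of_eq hcc)

theorem IsTree.ncard_le_two_mul_ncard_frontier (hG : G.IsTree) [G.LocallyFinite] (x₀ : V)
    (hdeg : ∀ x, 3 ≤ G.degree x) {A : Set V} (hA : A.Finite) :
    A.ncard ≤ 2 * (Frontier G x₀ A).ncard := by
  classical
  lift A to Finset V using hA
  have hF : Frontier G x₀ ↑A = ↑{x ∈ A | x ∈ Frontier G x₀ ↑A} := by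
    ext x
    simpa using fun hx : x ∈ Frontier G x₀ ↑A => hx.1
  have htwo : 2 * #{x ∈ A | x ∉ Frontier G x₀ ↑A} ≤
      #({x ∈ A | x ∉ Frontier G x₀ ↑A}.sigma (G.children x₀)) := by
    rw [card_sigma, mul_comm, ← smul_eq_mul]
    refine card_nsmul_le_sum _ _ _ fun x _ => ?_
    have := hdeg x
    have := hG.degree_le_card_children_add_one (x₀ := x₀) x
    omega
  have hsplit := card_filter_add_card_filter_not (s := A) (· ∈ Frontier G x₀ ↑A)
  have hinj := hG.card_sigma_children_le x₀ A
  rw [hF, Set.ncard_coe_finset, Set.ncard_coe_finset]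
  omega

end SimpleGraph

theorem frontier_card_ge_general {V : Type*} (G : SimpleGraph V)
    [G.LocallyFinite] (hconn : G.Connected) (hacyc : G.IsAcyclic)
    (x₀ : V) (M : ℕ) (hdeg : ∀ x, 3 ≤ G.degree x ∧ G.degree x ≤ M)
    (A : Set V) (hA : A.Finite) :
    (A.ncard : ℝ) / ((M : ℝ) - 1) ≤ ((Frontier G x₀ A).ncard : ℝ) := by
  have hM : (3 : ℝ) ≤ M := by exact_mod_cast (hdeg x₀).1.trans (hdeg x₀).2
  have hA2 : A.ncard ≤ 2 * (Frontier G x₀ A).ncard :=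
    IsTree.ncard_le_two_mul_ncard_frontier ⟨hconn, hacyc⟩ x₀ (fun x => (hdeg x).1) hA
  rw [div_le_iff₀ (by linarith), mul_comm]
  calc (A.ncard : ℝ) ≤ 2 * (Frontier G x₀ A).ncard := mod_cast hA2
    _ ≤ (M - 1) * (Frontier G x₀ A).ncard := by gcongr; linarith

theorem frontier_card_ge {V : Type*} [Infinite V] (G : SimpleGraph V)
    [G.LocallyFinite] (hconn : G.Connected) (hacyc : G.IsAcyclic)
    (x₀ : V) (M : ℕ) (hdeg : ∀ x, 3 ≤ G.degree x ∧ G.degree x ≤ M)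
    (A : Set V) (hA : A.Finite) :
    (A.ncard : ℝ) / ((M : ℝ) - 1) ≤ ((Frontier G x₀ A).ncard : ℝ) :=
  frontier_card_ge_general G hconn hacyc x₀ M hdeg A hA
end

section
/- Let 𝒢 be a sub-σ-algebra of 𝔽, let Z be a nonnegative 𝒢-measurable random variable, and let Y be a square-integrable random variable with E[Y | 𝒢] ≥ 2Z almost surely and E[(Y − E[Y|𝒢])² | 𝒢] ≤ C·Z almost surely, where C > 0 is a constant. Then for every z > 0, P({Y < (3/2)z} ∩ {Z ≥ z}) ≤ (4C/z)·P(Z ≥ z). -/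
/-!
On `{Y < 3z/2} ∩ {Z ≥ z}` the mean condition gives `E[Y | 𝒢] - Y ≥ 2Z - 3z/2 ≥ Z/2`, hence
`(Y - E[Y | 𝒢])² ≥ zZ/4`. So the indicator of the event is at most `w · (Y - E[Y | 𝒢])²` for the
bounded `𝒢`-measurable weight `w = 4/(zZ)` on `{Z ≥ z}`. Pulling `w` out of the conditional
expectation, the expectation of this equals that of `w · E[(Y - E[Y | 𝒢])² | 𝒢] ≤ (4C/z) · 1_{Z ≥ z}`.
-/

open MeasureTheory

namespace MeasureTheory

variable {Ω : Type*} {m m0 : MeasurableSpace Ω} {μ : Measure Ω}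

theorem measure_le_ofReal_integral_of_one_le {s : Set Ω} {f : Ω → ℝ} (hf : Integrable f μ)
    (hf_nonneg : 0 ≤ᵐ[μ] f) (hs : ∀ᵐ ω ∂μ, ω ∈ s → 1 ≤ f ω) :
    μ s ≤ ENNReal.ofReal (∫ ω, f ω ∂μ) := by
  rw [ofReal_integral_eq_lintegral_ofReal hf hf_nonneg]
  calc μ s ≤ μ {ω | 1 ≤ ENNReal.ofReal (f ω)} :=
        measure_mono_ae <| hs.mono fun ω hω hωs =>
          show 1 ≤ ENNReal.ofReal (f ω) by simpa using hω hωs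
    _ ≤ ∫⁻ ω, ENNReal.ofReal (f ω) ∂μ := by
        simpa using mul_meas_ge_le_lintegral₀ hf.aemeasurable.ennreal_ofReal 1

theorem integral_mul_condExp_of_bound (hm : m ≤ m0) [IsFiniteMeasure μ] {f g : Ω → ℝ}
    (hf : StronglyMeasurable[m] f) (hg : Integrable g μ) (c : ℝ) (hf_bound : ∀ᵐ ω ∂μ, ‖f ω‖ ≤ c) :
    ∫ ω, f ω * μ[g | m] ω ∂μ = ∫ ω, f ω * g ω ∂μ :=
  (integral_congr_ae (condExp_stronglyMeasurable_mul_of_bound hm hf hg c hf_bound)).symm.trans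
    (integral_condExp hm)

end MeasureTheory

theorem mul_le_four_mul_sq_sub {y e Z z : ℝ} (hz : 0 < z) (hzZ : z ≤ Z) (he : 2 * Z ≤ e)
    (hy : y < 3 / 2 * z) : z * Z ≤ 4 * (y - e) ^ 2 := by
  nlinarith

section Weight

variable {Ω : Type*} (Z : Ω → ℝ) (z : ℝ)

noncomputable def chebyshevWeight : Ω → ℝ :=
  {ω | z ≤ Z ω}.indicator fun ω => 4 / (z * Z ω)

variable {Z z}

theorem chebyshevWeight_nonneg (hz : 0 < z) (ω : Ω) : 0 ≤ chebyshevWeight Z z ω :=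
  Set.indicator_nonneg (fun ω (hω : z ≤ Z ω) => by have := hz.trans_le hω; positivity) ω

theorem norm_chebyshevWeight_le (hz : 0 < z) (ω : Ω) : ‖chebyshevWeight Z z ω‖ ≤ 4 / z ^ 2 := by
  rw [Real.norm_of_nonneg (chebyshevWeight_nonneg hz ω)]
  by_cases hω : z ≤ Z ω
  · rw [chebyshevWeight, Set.indicator_of_mem (show ω ∈ {ω | z ≤ Z ω} from hω), sq]
    gcongr
  · rw [chebyshevWeight, Set.indicator_of_notMem (show ω ∉ {ω | z ≤ Z ω} from hω)]
    positivity

theorem stronglyMeasurable_chebyshevWeight {m : MeasurableSpace Ω} (hZ : Measurable[m] Z) :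
    StronglyMeasurable[m] (chebyshevWeight Z z) :=
  ((measurable_const.div (measurable_const.mul hZ)).indicator
    (measurableSet_le measurable_const hZ)).stronglyMeasurable

theorem chebyshevWeight_mul_const_mul (hz : 0 < z) (C : ℝ) (ω : Ω) :
    chebyshevWeight Z z ω * (C * Z ω) = {ω | z ≤ Z ω}.indicator (fun _ => 4 * C / z) ω := by
  by_cases hω : z ≤ Z ω
  · have hZ : Z ω ≠ 0 := (hz.trans_le hω).ne'
    simp only [chebyshevWeight, Set.indicator_of_mem (show ω ∈ {ω | z ≤ Z ω} from hω)]
    field_simp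
  · simp only [chebyshevWeight, Set.indicator_of_notMem (show ω ∉ {ω | z ≤ Z ω} from hω),
      zero_mul]

theorem one_le_chebyshevWeight_mul_sq_sub {y e : ℝ} {ω : Ω} (hz : 0 < z) (hzZ : z ≤ Z ω)
    (he : 2 * Z ω ≤ e) (hy : y < 3 / 2 * z) : 1 ≤ chebyshevWeight Z z ω * (y - e) ^ 2 := by
  have hzZ_pos : 0 < z * Z ω := mul_pos hz (hz.trans_le hzZ)
  rw [chebyshevWeight, Set.indicator_of_mem (show ω ∈ {ω | z ≤ Z ω} from hzZ), div_mul_eq_mul_div,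
    one_le_div hzZ_pos]
  exact mul_le_four_mul_sq_sub hz hzZ he hy

end Weight

theorem conditional_chebyshev_step_general {Ω : Type*} {m0 : MeasurableSpace Ω}
    (P : Measure Ω) [IsProbabilityMeasure P]
    (m : MeasurableSpace Ω) (hm : m ≤ m0)
    (Z Y : Ω → ℝ) (C : ℝ)
    (hZmeas : Measurable[m] Z)
    (hY : MemLp Y 2 P)
    (hmean : (fun ω => 2 * Z ω) ≤ᵐ[P] P[Y | m])
    (hvar : P[(fun ω => (Y ω - (P[Y | m]) ω) ^ 2) | m] ≤ᵐ[P] fun ω => C * Z ω)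
    (z : ℝ) (hz : 0 < z) :
    P ({ω | Y ω < (3 / 2) * z} ∩ {ω | z ≤ Z ω})
      ≤ ENNReal.ofReal (4 * C / z) * P {ω | z ≤ Z ω} := by
  set B := {ω | z ≤ Z ω}
  set W : Ω → ℝ := fun ω => (Y ω - P[Y | m] ω) ^ 2
  have hB : MeasurableSet[m0] B := hm _ (measurableSet_le measurable_const hZmeas)
  have hw : StronglyMeasurable[m] (chebyshevWeight Z z) := stronglyMeasurable_chebyshevWeight hZmeas
  have hw_bound : ∀ᵐ ω ∂P, ‖chebyshevWeight Z z ω‖ ≤ 4 / z ^ 2 :=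
    .of_forall (norm_chebyshevWeight_le hz)
  have hW : Integrable W P := (hY.sub (hY.condExp one_le_two)).integrable_sq
  have hwW : Integrable (fun ω => chebyshevWeight Z z ω * W ω) P :=
    hW.bdd_mul (hw.mono hm).aestronglyMeasurable hw_bound
  have hevent : ∀ᵐ ω ∂P, ω ∈ {ω | Y ω < (3 / 2) * z} ∩ B → 1 ≤ chebyshevWeight Z z ω * W ω :=
    hmean.mono fun ω hω ⟨hYω, hBω⟩ => one_le_chebyshevWeight_mul_sq_sub hz hBω hω hYω
  have hvar_weighted :
      ∀ᵐ ω ∂P, chebyshevWeight Z z ω * P[W | m] ω ≤ B.indicator (fun _ => 4 * C / z) ω :=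
    hvar.mono fun ω hω => chebyshevWeight_mul_const_mul hz C ω ▸
      mul_le_mul_of_nonneg_left hω (chebyshevWeight_nonneg hz ω)
  calc P ({ω | Y ω < (3 / 2) * z} ∩ B)
      ≤ ENNReal.ofReal (∫ ω, chebyshevWeight Z z ω * W ω ∂P) :=
        measure_le_ofReal_integral_of_one_le hwW
          (.of_forall fun ω => mul_nonneg (chebyshevWeight_nonneg hz ω) (sq_nonneg _)) hevent
    _ = ENNReal.ofReal (∫ ω, chebyshevWeight Z z ω * P[W | m] ω ∂P) := by
        rw [integral_mul_condExp_of_bound hm hw hW _ hw_bound]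
    _ ≤ ENNReal.ofReal (∫ ω, B.indicator (fun _ => 4 * C / z) ω ∂P) :=
        ENNReal.ofReal_le_ofReal <| integral_mono_ae
          (integrable_condExp.bdd_mul (hw.mono hm).aestronglyMeasurable hw_bound)
          ((integrable_const _).indicator hB) hvar_weighted
    _ = ENNReal.ofReal (4 * C / z) * P B := by
        rw [integral_indicator_const _ hB, smul_eq_mul, mul_comm,
          ENNReal.ofReal_mul' measureReal_nonneg, ofReal_measureReal]

theorem conditional_chebyshev_step {Ω : Type*} {m0 : MeasurableSpace Ω}
    (P : Measure Ω) [IsProbabilityMeasure P]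
    (m : MeasurableSpace Ω) (hm : m ≤ m0)
    (Z Y : Ω → ℝ) (C : ℝ) (hC : 0 < C)
    (hZnn : ∀ ω, 0 ≤ Z ω) (hZmeas : Measurable[m] Z)
    (hY : MemLp Y 2 P)
    (hmean : (fun ω => 2 * Z ω) ≤ᵐ[P] P[Y | m])
    (hvar : P[(fun ω => (Y ω - (P[Y | m]) ω) ^ 2) | m] ≤ᵐ[P] fun ω => C * Z ω)
    (z : ℝ) (hz : 0 < z) :
    P ({ω | Y ω < (3 / 2) * z} ∩ {ω | z ≤ Z ω})
      ≤ ENNReal.ofReal (4 * C / z) * P {ω | z ≤ Z ω} :=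
  conditional_chebyshev_step_general P m hm Z Y C hZmeas hY hmean hvar z hz
end
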